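/- (Main theorem, combined correctness of relative select.) Let C be a common subsequence of S₁ and S₂ witnessed by strictly increasing character-preserving maps f (into S₁) and g (into S₂). With D the subsequence of S₂ at positions outside im(g), B, B_x the marking bitvectors of im(f) within S₁ and its x-occurrences, and B', B'_x the marking bitvectors of im(g) within S₂ and its x-occurrences, for every character x and every i with 1 ≤ i ≤ occ(x, S₂): select_x(S₂, i) = select₀(B', rank₀(B, select_x(S₁, select₀(B_x, rank₀(B'_x, i))))) if B'_x[i] = 0, and select_x(S₂, i) = select₁(B', select_x(D, rank₁(B'_x, i))) if B'_x[i] = 1. -/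

import Mathlib

namespace RS

variable {α : Type*} [DecidableEq α]

/-- 1-indexed position of the `j`-th occurrence of `a` in `S` (junk value if out of range). -/
def sel (a : α) (S : List α) (j : ℕ) : ℕ :=
  (((List.range S.length).filter (fun p => decide (S[p]? = some a))).getD (j - 1) 0) + 1

/-- Number of occurrences of `a` among the first `i` characters of `S` (1-indexed). -/
def rank (a : α) (S : List α) (i : ℕ) : ℕ := (S.take i).count a

/-- Total number of occurrences of `a` in `S`. -/
def occ (a : α) (S : List α) : ℕ := S.count a

def rank0 (B : List Bool) (i : ℕ) : ℕ := (B.take i).count false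
def rank1 (B : List Bool) (i : ℕ) : ℕ := (B.take i).count true
def sel0 (B : List Bool) (i : ℕ) : ℕ := sel false B i
def sel1 (B : List Bool) (i : ℕ) : ℕ := sel true B i

/-- `f` is a strictly increasing, character-preserving embedding of `S₂` into `S₁`
(all positions 1-indexed). -/
def Emb (S₂ S₁ : List α) (f : ℕ → ℕ) : Prop :=
  (∀ j, 1 ≤ j → j ≤ S₂.length → 1 ≤ f j ∧ f j ≤ S₁.length) ∧
  (∀ j k, 1 ≤ j → j < k → k ≤ S₂.length → f j < f k) ∧
  (∀ j, 1 ≤ j → j ≤ S₂.length → S₂[j - 1]? = S₁[f j - 1]?)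

/-- Is the 1-indexed position `p` in the image `{f 1, …, f m}`? -/
def inIm (m : ℕ) (f : ℕ → ℕ) (p : ℕ) : Bool :=
  (List.range m).any (fun j => f (j + 1) == p)

/-- Bitvector of length `n` marking with `true` (`1`) the 1-indexed positions
outside the image `{f 1, …, f m}`. -/
def markB (n m : ℕ) (f : ℕ → ℕ) : List Bool :=
  (List.range n).map (fun p => !inIm m f (p + 1))

/-- Bitvector of length `occ x S` whose `i`-th bit is `true` (`1`) iff the position
of the `i`-th occurrence of `x` in `S` is outside the image `{f 1, …, f m}`. -/
def markBx (x : α) (S : List α) (m : ℕ) (f : ℕ → ℕ) : List Bool :=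
  (List.range (occ x S)).map (fun i => !inIm m f (sel x S (i + 1)))

/-- The subsequence of `S` consisting of the characters at positions outside
the image `{g 1, …, g m}`, in order. -/
def delIm (S : List α) (m : ℕ) (g : ℕ → ℕ) : List α :=
  (List.range S.length).filterMap (fun p => if inIm m g (p + 1) then none else S[p]?)

/-! `rank a S p` counts the occurrences of `a` at 0-indexed positions `< p`, i.e. it is a
`Nat.count`, and `sel a S` inverts it on occurrence positions; so each step of the two formulas
becomes an identity between counts of positions.

If the `i`-th `x` of `S₂` lies at `g j`, the `x`s of `S₂` in `im g` up to `g j` correspond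
through `g` to the `x`s of `C` up to `j`, and likewise through `f` in `S₁`: `rank₀` in `B'_x` and
`select₀` in `B_x` both pass through `rank x C j`, while `rank₀ B` and `select₀ B'` turn `f j`
into `j` and `j` into `g j`. If it lies outside `im g`, with `r` one-bits of `B'` up to it, then
`D.take r` consists of the characters of `S₂` outside `im g` up to that position, so it contains
`rank₁(B'_x, i)` copies of `x` and ends with an `x`. -/

lemma count_congr {p q : ℕ → Prop} [DecidablePred p] [DecidablePred q] {n : ℕ}
    (h : ∀ k < n, p k ↔ q k) : Nat.count p n = Nat.count q n :=
  le_antisymm (Nat.count_mono_left fun k hk => (h k hk).1)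
    (Nat.count_mono_left fun k hk => (h k hk).2)

section RankSelect

variable {a : α} {S : List α}

lemma rank_eq_count (a : α) (S : List α) (k : ℕ) :
    rank a S k = Nat.count (fun q => S[q]? = some a) k := by
  induction k with
  | zero => simp [rank]
  | succ k ih =>
    rw [Nat.count_succ, ← ih, rank, rank, List.take_add_one, List.count_append]
    cases S[k]? <;> simp [List.count_singleton]

lemma rank_succ (a : α) (S : List α) (k : ℕ) :
    rank a S (k + 1) = rank a S k + if S[k]? = some a then 1 else 0 := by
  rw [rank_eq_count, rank_eq_count, Nat.count_succ]

lemma getElem?_eq_of_rank_succ {k : ℕ} (h : rank a S (k + 1) = rank a S k + 1) :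
    S[k]? = some a := by
  rw [rank_eq_count, rank_eq_count] at h
  exact Nat.count_succ_eq_succ_count_iff.mp h

lemma rank_le_occ (a : α) (S : List α) (k : ℕ) : rank a S k ≤ occ a S :=
  (List.take_sublist k S).count_le a

lemma sel_rank {p : ℕ} (hp : 1 ≤ p) (ha : S[p - 1]? = some a) :
    sel a S (rank a S p) = p := by
  obtain ⟨k, rfl⟩ : ∃ k, p = k + 1 := ⟨p - 1, by omega⟩
  simp only [Nat.add_sub_cancel] at ha
  have hk : k < S.length := (List.getElem?_eq_some_iff.mp ha).1
  have hsplit : List.range S.length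
      = List.range k ++ [k] ++ (List.range (S.length - (k + 1))).map (k + 1 + ·) := by
    rw [← List.range_succ, ← List.range_add]; congr 1; omega
  have hcount : Nat.count (fun q => S[q]? = some a) k
      = ((List.range k).filter (fun q => decide (S[q]? = some a))).length := by
    rw [Nat.count, List.countP_eq_length_filter]
  rw [rank_eq_count, Nat.count_succ, if_pos ha, sel, hsplit, List.filter_append,
    List.filter_append, List.filter_singleton, hcount]
  simp [ha, List.getD_eq_getElem?_getD]

lemma exists_rank_eq {j : ℕ} (hj : 1 ≤ j) (hjo : j ≤ occ a S) :
    ∃ p, 1 ≤ p ∧ S[p - 1]? = some a ∧ rank a S p = j := by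
  have hex : ∃ p, j ≤ rank a S p := ⟨S.length, by simpa [rank, occ] using hjo⟩
  have hfirst : Nat.find hex ≠ 0 := fun h => by
    have := Nat.find_spec hex
    rw [h] at this
    simp [rank] at this
    omega
  obtain ⟨k, hk⟩ := Nat.exists_eq_add_one_of_ne_zero hfirst
  have hreach : j ≤ rank a S (k + 1) := hk ▸ Nat.find_spec hex
  have hbefore : rank a S k < j := not_le.mp (Nat.find_min hex (by omega))
  have hstep : rank a S (k + 1) ≤ rank a S k + 1 := by
    rw [rank_succ]; split_ifs <;> omega
  refine ⟨k + 1, by omega, ?_, by omega⟩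
  simpa using getElem?_eq_of_rank_succ (k := k) (by omega)

end RankSelect

lemma inIm_iff {m : ℕ} {f : ℕ → ℕ} {p : ℕ} :
    inIm m f p = true ↔ ∃ j, 1 ≤ j ∧ j ≤ m ∧ f j = p := by
  simp only [inIm, List.any_eq_true, List.mem_range, beq_iff_eq]
  constructor
  · rintro ⟨j, hj, rfl⟩
    exact ⟨j + 1, by omega, by omega, rfl⟩
  · rintro ⟨j, hj1, hjm, rfl⟩
    exact ⟨j - 1, by omega, by rw [Nat.sub_add_cancel hj1]⟩

lemma getElem?_markB {n m : ℕ} {f : ℕ → ℕ} {q : ℕ} (hq : q < n) :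
    (markB n m f)[q]? = some (!inIm m f (q + 1)) := by
  simp [markB, hq]

lemma rank_markB (b : Bool) (n m : ℕ) (f : ℕ → ℕ) (k : ℕ) :
    rank b (markB n m f) k = Nat.count (fun q => q < n ∧ (!inIm m f (q + 1)) = b) k := by
  rw [rank_eq_count]
  refine count_congr fun q _ => ?_
  by_cases hq : q < n
  · simp [getElem?_markB hq, hq]
  · simp [markB, hq]

lemma getElem?_markBx {x : α} {S : List α} {m : ℕ} {f : ℕ → ℕ} {t : ℕ} (ht : t < occ x S) :
    (markBx x S m f)[t]? = some (!inIm m f (sel x S (t + 1))) := by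
  simp [markBx, ht]

lemma rank_markBx (b : Bool) (x : α) (S : List α) (m : ℕ) (f : ℕ → ℕ) (p : ℕ) :
    rank b (markBx x S m f) (rank x S p)
      = Nat.count (fun q => S[q]? = some x ∧ (!inIm m f (q + 1)) = b) p := by
  induction p with
  | zero => simp [rank]
  | succ p ih =>
    rw [Nat.count_succ, ← ih]
    by_cases hx : S[p]? = some x
    · have hr : rank x S (p + 1) = rank x S p + 1 := by rw [rank_succ, if_pos hx]
      have hocc : rank x S p < occ x S := by have := rank_le_occ x S (p + 1); omega
      have hsel : sel x S (rank x S p + 1) = p + 1 := hr ▸ sel_rank (by omega) (by simpa using hx)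
      rw [hr, rank_succ, getElem?_markBx hocc, hsel]
      simp [hx]
    · simp [rank_succ, hx]

section Embedding

variable {C S : List α} {f : ℕ → ℕ}

omit [DecidableEq α] in
lemma count_inIm_and (hf : Emb C S f) (P : ℕ → Prop) [DecidablePred P] {j : ℕ} (hj : 1 ≤ j)
    (hjm : j ≤ C.length) :
    Nat.count (fun q => inIm C.length f (q + 1) = true ∧ P q) (f j)
      = Nat.count (fun t => P (f (t + 1) - 1)) j := by
  have hmono : StrictMonoOn f (Set.Icc 1 C.length) :=
    fun j hj k hk hjk => hf.2.1 j k hj.1 hjk hk.2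
  rw [Nat.count_eq_card_filter_range, Nat.count_eq_card_filter_range]
  symm
  refine Finset.card_bij (fun t _ => f (t + 1) - 1) ?_ ?_ ?_
  · intro t ht
    simp only [Finset.mem_filter, Finset.mem_range] at ht ⊢
    have hpos := (hf.1 (t + 1) (by omega) (by omega)).1
    have hle : f (t + 1) ≤ f j :=
      (hmono.le_iff_le ⟨(by omega : 1 ≤ t + 1), (by omega : t + 1 ≤ C.length)⟩ ⟨hj, hjm⟩).mpr
        (by omega)
    refine ⟨by omega, inIm_iff.mpr ⟨t + 1, by omega, by omega, by omega⟩, ht.2⟩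
  · intro t ht t' ht' h
    simp only [Finset.mem_filter, Finset.mem_range] at ht ht'
    have hpos := (hf.1 (t + 1) (by omega) (by omega)).1
    have hpos' := (hf.1 (t' + 1) (by omega) (by omega)).1
    have := hmono.injOn (⟨by omega, by omega⟩ : t + 1 ∈ Set.Icc 1 C.length)
      (⟨by omega, by omega⟩ : t' + 1 ∈ Set.Icc 1 C.length) (by omega)
    omega
  · intro q hq
    simp only [Finset.mem_filter, Finset.mem_range] at hq
    obtain ⟨hqj, hin, hP⟩ := hq
    obtain ⟨k, hk, hkm, hfk⟩ := inIm_iff.mp hin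
    have := hmono.le_iff_le ⟨hk, hkm⟩ ⟨hj, hjm⟩
    refine ⟨k - 1, ?_, ?_⟩
    · simp only [Finset.mem_filter, Finset.mem_range, Nat.sub_add_cancel hk, hfk]
      exact ⟨by omega, by simpa using hP⟩
    · simp only [Nat.sub_add_cancel hk, hfk, Nat.add_sub_cancel]

omit [DecidableEq α] in
lemma rank_markB_emb (hf : Emb C S f) {j : ℕ} (hj : 1 ≤ j) (hjm : j ≤ C.length) :
    rank false (markB S.length C.length f) (f j) = j := by
  have hfj := (hf.1 j hj hjm).2
  rw [rank_markB, count_congr (q := fun q => inIm C.length f (q + 1) = true ∧ True)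
    fun q hq => by
      simp only [Bool.not_eq_false', and_true]; exact ⟨And.right, fun h => ⟨by omega, h⟩⟩,
    count_inIm_and hf _ hj hjm]
  simp

omit [DecidableEq α] in
lemma sel_markB_emb (hf : Emb C S f) {j : ℕ} (hj : 1 ≤ j) (hjm : j ≤ C.length) :
    sel false (markB S.length C.length f) j = f j := by
  obtain ⟨hfj1, hfjn⟩ := hf.1 j hj hjm
  have hbit : (markB S.length C.length f)[f j - 1]? = some false := by
    rw [getElem?_markB (by omega), Nat.sub_add_cancel hfj1, inIm_iff.mpr ⟨j, hj, hjm, rfl⟩]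
    rfl
  conv_lhs => rw [← rank_markB_emb hf hj hjm]
  exact sel_rank hfj1 hbit

lemma rank_markBx_emb (hf : Emb C S f) {x : α} {j : ℕ} (hj : 1 ≤ j) (hjm : j ≤ C.length) :
    rank false (markBx x S C.length f) (rank x S (f j)) = rank x C j := by
  rw [rank_markBx, rank_eq_count x C,
    count_congr (q := fun q => inIm C.length f (q + 1) = true ∧ S[q]? = some x)
      fun q _ => by simp only [Bool.not_eq_false']; exact and_comm,
    count_inIm_and hf _ hj hjm]
  refine count_congr fun t ht => ?_
  have hCS : C[t]? = S[f (t + 1) - 1]? := by simpa using hf.2.2 (t + 1) (by omega) (by omega)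
  rw [hCS]

lemma sel_markBx_emb (hf : Emb C S f) {x : α} {j : ℕ} (hj : 1 ≤ j) (hjm : j ≤ C.length)
    (hx : C[j - 1]? = some x) :
    sel false (markBx x S C.length f) (rank x C j) = rank x S (f j) := by
  obtain ⟨hfj1, hfjn⟩ := hf.1 j hj hjm
  have hSx : S[f j - 1]? = some x := (hf.2.2 j hj hjm).symm.trans hx
  have hr : 1 ≤ rank x S (f j) := by
    have := rank_succ x S (f j - 1); rw [Nat.sub_add_cancel hfj1, if_pos hSx] at this; omega
  have hbit : (markBx x S C.length f)[rank x S (f j) - 1]? = some false := by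
    rw [getElem?_markBx (by have := rank_le_occ x S (f j); omega), Nat.sub_add_cancel hr,
      sel_rank hfj1 hSx, inIm_iff.mpr ⟨j, hj, hjm, rfl⟩]
    rfl
  rw [← rank_markBx_emb hf hj hjm]
  exact sel_rank hr hbit

end Embedding

section FilterMapRange

variable {β : Type*}

lemma take_filterMap_range (h : ℕ → Option β) {p n : ℕ} (hpn : p ≤ n) :
    ((List.range n).filterMap h).take (Nat.count (fun q => (h q).isSome) p)
      = (List.range p).filterMap h := by
  obtain ⟨d, rfl⟩ := Nat.exists_eq_add_of_le hpn
  rw [List.range_add, List.filterMap_append, List.take_left']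
  simp [List.length_filterMap_eq_countP, Nat.count]

lemma count_filterMap_range (h : ℕ → Option α) (x : α) (p : ℕ) :
    ((List.range p).filterMap h).count x = Nat.count (fun q => h q = some x) p := by
  simp only [List.count_filterMap, Nat.count, Bool.beq_eq_decide_eq]

end FilterMapRange

lemma rank_delIm (x : α) (S : List α) (m : ℕ) (g : ℕ → ℕ) {p : ℕ} (hp : p ≤ S.length) :
    rank x (delIm S m g) (rank true (markB S.length m g) p)
      = Nat.count (fun q => S[q]? = some x ∧ (!inIm m g (q + 1)) = true) p := by
  have hmark : rank true (markB S.length m g) p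
      = Nat.count (fun q => (if inIm m g (q + 1) then none else S[q]?).isSome) p := by
    rw [rank_markB]
    refine count_congr fun q hq => ?_
    have hq : q < S.length := by omega
    cases inIm m g (q + 1) <;> simp [hq]
  rw [hmark, rank, delIm, take_filterMap_range _ hp, count_filterMap_range]
  refine count_congr fun q _ => ?_
  cases inIm m g (q + 1) <;> simp

lemma relative_select_of_inIm {C S₁ S₂ : List α} {f g : ℕ → ℕ} (hf : Emb C S₁ f)
    (hg : Emb C S₂ g) {x : α} {p : ℕ} (hx : S₂[p - 1]? = some x) (hin : inIm C.length g p = true) :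
    sel false (markB S₂.length C.length g) (rank false (markB S₁.length C.length f)
      (sel x S₁ (sel false (markBx x S₁ C.length f)
        (rank false (markBx x S₂ C.length g) (rank x S₂ p))))) = p := by
  obtain ⟨j, hj, hjm, rfl⟩ := inIm_iff.mp hin
  have hCx : C[j - 1]? = some x := (hg.2.2 j hj hjm).trans hx
  have hS₁x : S₁[f j - 1]? = some x := (hf.2.2 j hj hjm).symm.trans hCx
  rw [rank_markBx_emb hg hj hjm, sel_markBx_emb hf hj hjm hCx, sel_rank (hf.1 j hj hjm).1 hS₁x,
    rank_markB_emb hf hj hjm, sel_markB_emb hg hj hjm]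

lemma relative_select_of_inIm_eq_false {x : α} {S : List α} {m : ℕ} {g : ℕ → ℕ} {p : ℕ}
    (hp : 1 ≤ p) (hx : S[p - 1]? = some x) (hout : inIm m g p = false) :
    sel true (markB S.length m g)
      (sel x (delIm S m g) (rank true (markBx x S m g) (rank x S p))) = p := by
  obtain ⟨k, rfl⟩ : ∃ k, p = k + 1 := ⟨p - 1, by omega⟩
  simp only [Nat.add_sub_cancel] at hx
  have hk : k < S.length := (List.getElem?_eq_some_iff.mp hx).1
  have hbit : (markB S.length m g)[k]? = some true := by
    rw [getElem?_markB hk, hout]; rfl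
  set r := rank true (markB S.length m g) k
  have hr : rank true (markB S.length m g) (k + 1) = r + 1 := by rw [rank_succ, if_pos hbit]
  have hD : (delIm S m g)[r]? = some x := by
    apply getElem?_eq_of_rank_succ
    rw [← hr, rank_delIm x S m g hk, rank_delIm x S m g hk.le, Nat.count_succ,
      if_pos ⟨hx, by simp [hout]⟩]
  have hrank : rank true (markBx x S m g) (rank x S (k + 1)) = rank x (delIm S m g) (r + 1) := by
    rw [← hr, rank_delIm x S m g hk, rank_markBx]
  rw [hrank, sel_rank (by omega) (by simpa using hD), ← hr,
    sel_rank (by omega) (by simpa using hbit)]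

theorem relative_select_main (S₁ S₂ C : List α) (f g : ℕ → ℕ)
    (hf : Emb C S₁ f) (hg : Emb C S₂ g)
    (x : α) (i : ℕ) (hi1 : 1 ≤ i) (hi2 : i ≤ occ x S₂) :
    ((markBx x S₂ C.length g)[i - 1]? = some false →
      sel x S₂ i =
        sel0 (markB S₂.length C.length g)
          (rank0 (markB S₁.length C.length f)
            (sel x S₁
              (sel0 (markBx x S₁ C.length f)
                (rank0 (markBx x S₂ C.length g) i))))) ∧
    ((markBx x S₂ C.length g)[i - 1]? = some true →
      sel x S₂ i =
        sel1 (markB S₂.length C.length g)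
          (sel x (delIm S₂ C.length g) (rank1 (markBx x S₂ C.length g) i))) := by
  obtain ⟨p, hp, hx, rfl⟩ := exists_rank_eq hi1 hi2
  have hbit : (markBx x S₂ C.length g)[rank x S₂ p - 1]? = some (!inIm C.length g p) := by
    rw [getElem?_markBx (by omega), Nat.sub_add_cancel hi1, sel_rank hp hx]
  rw [hbit, sel_rank hp hx]
  constructor
  · intro hin
    exact (relative_select_of_inIm hf hg hx (by simpa using hin)).symm
  · intro hout
    exact (relative_select_of_inIm_eq_false hp hx (by simpa using hout)).symm

end RS
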